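/- Let p₁, p₂, p₃ ∈ ℝ³ be jointly active pursuers whose projections p̄₁, p̄₂, p̄₃ onto T are not collinear, let c be the unique point of T with ‖c − p₁‖ = ‖c − p₂‖ = ‖c − p₃‖, let r = ‖p₁ − c‖, and let S be the convex hull of {p̄₁, p̄₂, p̄₃} in T. Let e ∈ ℝ³ with e₃ > 0, e ∉ {p₁, p₂, p₃}. Then the following are equivalent: (i) for every t ∈ T, min(‖t − p₁‖, ‖t − p₂‖, ‖t − p₃‖) ≤ ‖t − e‖, and there exists t ∈ T with ‖t − e‖ ≤ min(‖t − p₁‖, ‖t − p₂‖, ‖t − p₃‖); (ii) ‖e − c‖ = r and (e₁, e₂, 0) ∈ S. (Theorem 3: the barrier for three noncollinear-projection active pursuers is the part of the sphere of radius r centered at c lying over the triangle S in the play half-space.) -/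

import Mathlib

noncomputable section

/-- The point of `ℝ³` with the given three coordinates. -/
def mk3 (x y z : ℝ) : EuclideanSpace ℝ (Fin 3) :=
  (WithLp.equiv 2 (Fin 3 → ℝ)).symm ![x, y, z]

/-- The projection of a point onto the target plane `T = {z | z₃ = 0}`. -/
def projT (p : EuclideanSpace ℝ (Fin 3)) : EuclideanSpace ℝ (Fin 3) :=
  mk3 (p 0) (p 1) 0

/-- The mirror of a point across the target plane `T = {z | z₃ = 0}`. -/
def mirrorT (p : EuclideanSpace ℝ (Fin 3)) : EuclideanSpace ℝ (Fin 3) :=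
  mk3 (p 0) (p 1) (-(p 2))

/-- `c` is the simultaneous-arrival point `c_{a,b}`: the (unique) point of the target
plane on the line through the projections of `a` and `b` that is equidistant from
`a` and `b`. -/
def IsCab (a b c : EuclideanSpace ℝ (Fin 3)) : Prop :=
  c 2 = 0 ∧ (∃ u : ℝ, c = projT a + u • (projT b - projT a)) ∧ ‖c - a‖ = ‖c - b‖

/-- Membership in the pursuer winning subspace `W_P^{a,b}` of the pair `{a, b}`, given the
simultaneous-arrival point `c = c_{a,b}`. -/
def memWP (a b c z : EuclideanSpace ℝ (Fin 3)) : Prop :=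
  z 2 > 0 ∧
  (∃ β : ℝ, 0 ≤ β ∧ β ≤ 1 ∧
    z 0 = β * a 0 + (1 - β) * b 0 ∧ z 1 = β * a 1 + (1 - β) * b 1) ∧
  ‖z - c‖ > ‖a - c‖

/-- Three pursuers are jointly active: for every pair `i ≠ j` their horizontal projections
differ, and neither the remaining pursuer `p_k` nor its mirror across the target plane lies
in the pursuer winning subspace `W_P^{p_i,p_j}` of the pair. -/
def JointlyActive (p : Fin 3 → EuclideanSpace ℝ (Fin 3)) : Prop :=
  ∀ i j k : Fin 3, i ≠ j → k ≠ i → k ≠ j →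
    (p i 0, p i 1) ≠ (p j 0, p j 1) ∧
    ∀ c : EuclideanSpace ℝ (Fin 3), IsCab (p i) (p j) c →
      ¬memWP (p i) (p j) c (p k) ∧ ¬memWP (p i) (p j) c (mirrorT (p k))

/-!
For `t` and `c` in the target plane and pursuers at common distance `r` from `c`,
`‖t - pᵢ‖² - ‖t - e‖² = 2 ⟪t - c, ē - p̄ᵢ⟫ + (r² - ‖e - c‖²)`.
Taking `t = c` in the first barrier condition gives `‖e - c‖ ≥ r`. If `ē` lies in the convex hull
of the `p̄ᵢ`, then for every `t` some `p̄ᵢ` makes the inner product nonpositive: this turns the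
second condition into `‖e - c‖ ≤ r` and, once `‖e - c‖ = r`, yields the first condition everywhere.
If `ē` lies outside the hull, a separating direction `w` gives a target point `t = c + s w`, with
`s` large, that `e` reaches strictly before every pursuer.
-/

open Set
open scoped RealInnerProductSpace

section InnerProductSpace

variable {E : Type*} [NormedAddCommGroup E] [InnerProductSpace ℝ E]

lemma norm_sub_sq_sub_norm_sub_sq (t c q e : E) :
    ‖t - q‖ ^ 2 - ‖t - e‖ ^ 2 = 2 * ⟪t - c, e - q⟫ + (‖c - q‖ ^ 2 - ‖c - e‖ ^ 2) := by
  have h : ∀ y, ‖t - y‖ ^ 2 = ‖t - c‖ ^ 2 - 2 * ⟪t - c, y - c⟫ + ‖c - y‖ ^ 2 := fun y => by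
    rw [← norm_sub_rev y c, ← norm_sub_sq_real]; congr 2; abel
  rw [h q, h e, inner_sub_right, inner_sub_right, inner_sub_right]
  ring

lemma norm_sub_lt_norm_sub_iff_inner (t c q e : E) :
    ‖t - e‖ < ‖t - q‖ ↔ ‖c - e‖ ^ 2 - ‖c - q‖ ^ 2 < 2 * ⟪t - c, e - q⟫ := by
  rw [← sq_lt_sq₀ (norm_nonneg _) (norm_nonneg _)]
  constructor <;> intro h <;> linarith [norm_sub_sq_sub_norm_sub_sq t c q e]

lemma norm_sub_le_norm_sub_iff_inner (t c q e : E) :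
    ‖t - e‖ ≤ ‖t - q‖ ↔ ‖c - e‖ ^ 2 - ‖c - q‖ ^ 2 ≤ 2 * ⟪t - c, e - q⟫ := by
  rw [← sq_le_sq₀ (norm_nonneg _) (norm_nonneg _)]
  constructor <;> intro h <;> linarith [norm_sub_sq_sub_norm_sub_sq t c q e]

lemma exists_inner_sub_nonpos_of_mem_convexHull {s : Set E} {x : E}
    (hx : x ∈ convexHull ℝ s) (v : E) : ∃ q ∈ s, ⟪v, x - q⟫ ≤ 0 := by
  obtain ⟨q, hq, h⟩ :=
    ((innerₛₗ ℝ v).convexOn convex_univ).exists_ge_of_mem_convexHull (subset_univ s) hx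
  refine ⟨q, hq, ?_⟩
  rw [inner_sub_right]
  simpa using h

lemma exists_lt_inner_sub_of_notMem_convexHull [CompleteSpace E] {s : Set E} (hs : s.Finite)
    {x : E} (hx : x ∉ convexHull ℝ s) (K : ℝ) : ∃ v : E, ∀ q ∈ s, K < ⟪v, x - q⟫ := by
  obtain ⟨f, u, hfs, hux⟩ :=
    geometric_hahn_banach_closed_point (convex_convexHull ℝ s)
      (hs.isClosed_convexHull (𝕜 := ℝ)) hx
  have hf : ∀ y, ⟪(InnerProductSpace.toDual ℝ E).symm f, y⟫ = f y :=
    fun _ => InnerProductSpace.toDual_symm_apply (𝕜 := ℝ)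
  refine ⟨((|K| + 1) / (f x - u)) • (InnerProductSpace.toDual ℝ E).symm f, fun q hq => ?_⟩
  have hgap : f x - u ≤ f (x - q) := by
    rw [map_sub]; linarith [hfs q (subset_convexHull ℝ s hq)]
  have hpos : 0 < f x - u := by linarith
  rw [real_inner_smul_left, hf]
  calc K < |K| + 1 := by linarith [le_abs_self K]
    _ = (|K| + 1) / (f x - u) * (f x - u) := by field_simp
    _ ≤ (|K| + 1) / (f x - u) * f (x - q) := by gcongr

end InnerProductSpace

local notation "ℝ³" => EuclideanSpace ℝ (Fin 3)

lemma projT_apply_two (w : ℝ³) : projT w 2 = 0 := rfl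

lemma inner_projT_right {u : ℝ³} (hu : u 2 = 0) (w : ℝ³) : ⟪u, projT w⟫ = ⟪u, w⟫ := by
  simp [EuclideanSpace.inner_eq_star_dotProduct, dotProduct, Fin.sum_univ_three, projT, mk3, hu]

lemma inner_projT_left {u : ℝ³} (hu : u 2 = 0) (w : ℝ³) : ⟪projT w, u⟫ = ⟪w, u⟫ := by
  rw [real_inner_comm, inner_projT_right hu, real_inner_comm]

lemma inner_sub_eq_inner_projT_sub_projT {t c : ℝ³} (ht : t 2 = 0) (hc : c 2 = 0) (e q : ℝ³) :
    ⟪t - c, e - q⟫ = ⟪t - c, projT e - projT q⟫ := by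
  have htc : (t - c) 2 = 0 := by simp [ht, hc]
  rw [inner_sub_right, inner_sub_right, inner_projT_right htc, inner_projT_right htc]

def OnBarrier {ι : Type*} (p : ι → ℝ³) (e : ℝ³) : Prop :=
  (∀ t : ℝ³, t 2 = 0 → ∃ i, ‖t - p i‖ ≤ ‖t - e‖) ∧ ∃ t : ℝ³, t 2 = 0 ∧ ∀ i, ‖t - e‖ ≤ ‖t - p i‖

section Barrier

variable {ι : Type*} {p : ι → ℝ³} {c e : ℝ³} {R : ℝ}

lemma projT_mem_convexHull_of_forall_exists_norm_le [Finite ι] (hc : c 2 = 0)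
    (hR : ∀ i, ‖c - p i‖ = R) (h : ∀ t : ℝ³, t 2 = 0 → ∃ i, ‖t - p i‖ ≤ ‖t - e‖) :
    projT e ∈ convexHull ℝ (range fun i => projT (p i)) := by
  by_contra hout
  obtain ⟨v, hv⟩ := exists_lt_inner_sub_of_notMem_convexHull (finite_range _) hout
    ((‖c - e‖ ^ 2 - R ^ 2) / 2)
  have ht : (c + projT v) 2 = 0 := by simp [projT_apply_two, hc]
  obtain ⟨i, hi⟩ := h (c + projT v) ht
  refine (not_lt.2 hi) ((norm_sub_lt_norm_sub_iff_inner _ c _ _).2 ?_)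
  have hvi := hv _ (mem_range_self i)
  rw [inner_sub_eq_inner_projT_sub_projT ht hc, add_sub_cancel_left,
    inner_projT_left (by simp [projT_apply_two]), hR]
  linarith

lemma norm_sub_le_of_exists_forall_norm_le (hc : c 2 = 0) (hR : ∀ i, ‖c - p i‖ = R)
    (hS : projT e ∈ convexHull ℝ (range fun i => projT (p i)))
    (h : ∃ t : ℝ³, t 2 = 0 ∧ ∀ i, ‖t - e‖ ≤ ‖t - p i‖) : ‖c - e‖ ≤ R := by
  obtain ⟨t, ht, hle⟩ := h
  obtain ⟨_, ⟨i, rfl⟩, hi⟩ := exists_inner_sub_nonpos_of_mem_convexHull hS (t - c)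
  have hcmp := (norm_sub_le_norm_sub_iff_inner t c _ _).1 (hle i)
  rw [inner_sub_eq_inner_projT_sub_projT ht hc] at hcmp
  rw [← hR i]
  exact (sq_le_sq₀ (norm_nonneg _) (norm_nonneg _)).1 (by linarith)

lemma exists_norm_le_of_projT_mem_convexHull (hc : c 2 = 0) (hR : ∀ i, ‖c - p i‖ = R)
    (he : ‖c - e‖ = R) (hS : projT e ∈ convexHull ℝ (range fun i => projT (p i)))
    {t : ℝ³} (ht : t 2 = 0) : ∃ i, ‖t - p i‖ ≤ ‖t - e‖ := by
  obtain ⟨_, ⟨i, rfl⟩, hi⟩ := exists_inner_sub_nonpos_of_mem_convexHull hS (t - c)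
  refine ⟨i, not_lt.1 fun hlt => ?_⟩
  rw [norm_sub_lt_norm_sub_iff_inner t c, inner_sub_eq_inner_projT_sub_projT ht hc, he,
    hR] at hlt
  linarith

theorem onBarrier_iff [Finite ι] (hc : c 2 = 0) (hR : ∀ i, ‖c - p i‖ = R) :
    OnBarrier p e ↔ ‖c - e‖ = R ∧ projT e ∈ convexHull ℝ (range fun i => projT (p i)) := by
  constructor
  · rintro ⟨hfar, hnear⟩
    have hS := projT_mem_convexHull_of_forall_exists_norm_le hc hR hfar
    obtain ⟨i, hi⟩ := hfar c hc
    exact ⟨le_antisymm (norm_sub_le_of_exists_forall_norm_le hc hR hS hnear) (hR i ▸ hi), hS⟩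
  · rintro ⟨he, hS⟩
    exact ⟨fun t ht => exists_norm_le_of_projT_mem_convexHull hc hR he hS ht,
      c, hc, fun i => by rw [hR, he]⟩

end Barrier

theorem noncollinear_three_pursuer_barrier_general (p : Fin 3 → EuclideanSpace ℝ (Fin 3))
    (c : EuclideanSpace ℝ (Fin 3)) (hcT : c 2 = 0)
    (hc1 : ‖c - p 0‖ = ‖c - p 1‖) (hc2 : ‖c - p 1‖ = ‖c - p 2‖)
    (e : EuclideanSpace ℝ (Fin 3)) :
    ((∀ t : EuclideanSpace ℝ (Fin 3), t 2 = 0 →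
        min ‖t - p 0‖ (min ‖t - p 1‖ ‖t - p 2‖) ≤ ‖t - e‖) ∧
      (∃ t : EuclideanSpace ℝ (Fin 3), t 2 = 0 ∧
        ‖t - e‖ ≤ min ‖t - p 0‖ (min ‖t - p 1‖ ‖t - p 2‖))) ↔
    (‖e - c‖ = ‖p 0 - c‖ ∧
      projT e ∈ convexHull ℝ ({projT (p 0), projT (p 1), projT (p 2)} :
        Set (EuclideanSpace ℝ (Fin 3)))) := by
  have hR : ∀ i, ‖c - p i‖ = ‖c - p 0‖ := by
    intro i; fin_cases i <;> simp [hc1, hc2]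
  have hS : ({projT (p 0), projT (p 1), projT (p 2)} : Set ℝ³) = range fun i => projT (p i) := by
    ext; simp [Fin.exists_fin_succ, eq_comm]
  rw [hS, norm_sub_rev e, norm_sub_rev (p 0), ← onBarrier_iff hcT hR, OnBarrier]
  simp [Fin.exists_fin_succ, Fin.forall_fin_succ]

/-- Theorem 3 (barrier): for three jointly active pursuers with noncollinear projections,
with `c` the unique point of the target plane equidistant from the three pursuers,
`r = ‖p₁ − c‖`, and `S` the triangle spanned by the projections, the barrier is the part
of the sphere of radius `r` centered at `c` lying over `S` in the play half-space. -/
theorem noncollinear_three_pursuer_barrier (p : Fin 3 → EuclideanSpace ℝ (Fin 3))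
    (hactive : JointlyActive p)
    (hncol : ¬Collinear ℝ ({projT (p 0), projT (p 1), projT (p 2)} :
      Set (EuclideanSpace ℝ (Fin 3))))
    (c : EuclideanSpace ℝ (Fin 3)) (hcT : c 2 = 0)
    (hc1 : ‖c - p 0‖ = ‖c - p 1‖) (hc2 : ‖c - p 1‖ = ‖c - p 2‖)
    (e : EuclideanSpace ℝ (Fin 3)) (he : e 2 > 0) (hne : ∀ m, e ≠ p m) :
    ((∀ t : EuclideanSpace ℝ (Fin 3), t 2 = 0 →
        min ‖t - p 0‖ (min ‖t - p 1‖ ‖t - p 2‖) ≤ ‖t - e‖) ∧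
      (∃ t : EuclideanSpace ℝ (Fin 3), t 2 = 0 ∧
        ‖t - e‖ ≤ min ‖t - p 0‖ (min ‖t - p 1‖ ‖t - p 2‖))) ↔
    (‖e - c‖ = ‖p 0 - c‖ ∧
      projT e ∈ convexHull ℝ ({projT (p 0), projT (p 1), projT (p 2)} :
        Set (EuclideanSpace ℝ (Fin 3)))) :=
  noncollinear_three_pursuer_barrier_general p c hcT hc1 hc2 e
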